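/- For every $r \in \mathbb{N}$ and $d \ge 1$, $\int_{\mathcal{S}} \sum_{k \in \mathbb{N}_0^d \cap r\mathcal{S}} P_{k,r}(x)^2 \, dx = \frac{2^{-d}\sqrt{\pi}\,\Gamma(r+1)}{\Gamma(d/2 + 1/2)\,\Gamma(r + d/2 + 1)}$, where $\mathcal{S}$ is the $d$-dimensional unit simplex. -/

import Mathlib

open MeasureTheory Finset

/-- The d-dimensional unit simplex. -/
def simplexSet (d : ℕ) : Set (Fin d → ℝ) :=
  {x | (∀ i, 0 ≤ x i ∧ x i ≤ 1) ∧ ∑ i, x i ≤ 1}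

/-- The lattice points of the discrete simplex `ℕ₀^d ∩ mS`. -/
def grid (d m : ℕ) : Finset (Fin d → ℕ) :=
  (Finset.Icc 0 (fun _ => m)).filter (fun k => ∑ i, k i ≤ m)

/-- Multinomial(m, x) probability mass at k. -/
noncomputable def Pw (d m : ℕ) (k : Fin d → ℕ) (x : Fin d → ℝ) : ℝ :=
  ((m.factorial : ℝ) / ((m - ∑ i, k i).factorial * ∏ i, (k i).factorial)) *
    (1 - ∑ i, x i) ^ (m - ∑ i, k i) * ∏ i, x i ^ k i

/-! Squaring `P_{k,r}` and integrating over the simplex gives a Dirichlet integral, equal to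
`(r!)² / (2r+d)!` times `∏ᵢ C(2kᵢ, kᵢ)`, the product running over the `d + 1` coordinates
`k₁, …, k_d, r - |k|`. The Dirichlet integral is computed by induction on `d`: integrating out
the first coordinate rescales the remaining simplex and leaves a Beta integral.

Since `C(2n, n) = 4ⁿ multichoose (1/2) n` are the coefficients of `(1 - 4x)^(-1/2)`, the sum of
these products over `k` is, by Chu–Vandermonde, `4^r multichoose ((d+1)/2) r`, and Legendre's
duplication formula turns this into the stated quotient of Gamma values. -/

namespace Ring

variable {R : Type*} [CommRing R] [BinomialRing R]

theorem multichoose_add (r s : R) (n : ℕ) :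
    multichoose (r + s) n =
      ∑ ij ∈ antidiagonal n, multichoose r ij.1 * multichoose s ij.2 := by
  have h := add_choose_eq (r := -r) (s := -s) n (Commute.all _ _)
  simp only [← neg_add, choose_neg', smul_mul_smul_comm, ← Int.negOnePow_add] at h
  rw [sum_congr rfl fun ij hij => by rw [← Nat.cast_add, mem_antidiagonal.1 hij],
    ← smul_sum] at h
  exact smul_left_cancel _ h

theorem succ_mul_multichoose_succ (r : R) (n : ℕ) :
    (n + 1) * multichoose r (n + 1) = (r + n) * multichoose r n := by
  have : IsAddTorsionFree R := BinomialRing.toIsAddTorsionFree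
  apply nsmul_right_injective (Nat.factorial_ne_zero n)
  have h := factorial_nsmul_multichoose_eq_ascPochhammer r (n + 1)
  rw [Polynomial.ascPochhammer_smeval_eq_eval, ascPochhammer_succ_eval,
    ← Polynomial.ascPochhammer_smeval_eq_eval, ← factorial_nsmul_multichoose_eq_ascPochhammer,
    Nat.factorial_succ, mul_nsmul] at h
  simp only [nsmul_eq_mul] at h ⊢
  push_cast at h
  linear_combination h

end Ring

theorem Nat.cast_centralBinom_eq_four_pow_mul_multichoose (n : ℕ) :
    (n.centralBinom : ℝ) = 4 ^ n * Ring.multichoose (1 / 2 : ℝ) n := by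
  induction n with
  | zero => simp
  | succ n ih =>
    have hrec : ((n + 1 : ℕ) : ℝ) * (n + 1).centralBinom = 2 * (2 * n + 1) * n.centralBinom := by
      exact_mod_cast Nat.succ_mul_centralBinom_succ n
    have hmc := Ring.succ_mul_multichoose_succ (1 / 2 : ℝ) n
    apply mul_left_cancel₀ (by positivity : ((n : ℝ) + 1) ≠ 0)
    push_cast at hrec
    rw [hrec, ih, pow_succ]
    linear_combination -(4 : ℝ) ^ n * 4 * hmc

theorem Nat.centralBinom_mul_factorial_sq (n : ℕ) :
    n.centralBinom * n.factorial ^ 2 = (2 * n).factorial := by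
  have h := Nat.choose_mul_factorial_mul_factorial (Nat.le_mul_of_pos_left n two_pos)
  rwa [two_mul, Nat.add_sub_cancel, mul_assoc, ← sq, ← two_mul,
    ← Nat.centralBinom_eq_two_mul_choose] at h

theorem mem_grid {d m : ℕ} {k : Fin d → ℕ} : k ∈ grid d m ↔ ∑ i, k i ≤ m := by
  simp only [grid, mem_filter, mem_Icc, and_iff_right_iff_imp]
  exact fun h => ⟨fun _ => Nat.zero_le _, fun i => (single_le_sum (by simp) (mem_univ i)).trans h⟩

theorem sum_grid_succ {M : Type*} [AddCommMonoid M] (d r : ℕ) (f : (Fin (d + 1) → ℕ) → M) :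
    ∑ k ∈ grid (d + 1) r, f k = ∑ j ∈ range (r + 1), ∑ k ∈ grid d (r - j), f (Fin.cons j k) := by
  rw [sum_sigma']
  refine sum_nbij' (fun k => ⟨k 0, Fin.tail k⟩) (fun p => Fin.cons p.1 p.2) ?_ ?_ ?_ ?_ ?_
  all_goals simp [mem_grid, Fin.sum_univ_succ, Fin.tail]
  all_goals omega

theorem sum_grid_prod_multichoose {R : Type*} [CommRing R] [BinomialRing R] (d : ℕ)
    (s : Fin d → R) (u : R) (r : ℕ) :
    ∑ k ∈ grid d r, (∏ i, Ring.multichoose (s i) (k i)) * Ring.multichoose u (r - ∑ i, k i) =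
      Ring.multichoose (∑ i, s i + u) r := by
  induction d generalizing r with
  | zero =>
    rw [show grid 0 r = univ from eq_univ_of_forall fun k => mem_grid.2 (by simp)]
    simp
  | succ d ih =>
    have inner : ∀ j ∈ range (r + 1),
        ∑ k ∈ grid d (r - j), (∏ i, Ring.multichoose (s i) ((Fin.cons j k : Fin (d + 1) → ℕ) i)) *
          Ring.multichoose u (r - ∑ i, (Fin.cons j k : Fin (d + 1) → ℕ) i) =
        Ring.multichoose (s 0) j * Ring.multichoose (∑ i : Fin d, s i.succ + u) (r - j) := by
      intro j _
      simp only [Fin.prod_univ_succ, Fin.sum_univ_succ, Fin.cons_zero, Fin.cons_succ,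
        ← Nat.sub_sub, mul_assoc, ← mul_sum]
      rw [ih (fun i => s i.succ)]
    rw [sum_grid_succ, sum_congr rfl inner, Fin.sum_univ_succ, add_assoc, Ring.multichoose_add,
      Nat.sum_antidiagonal_eq_sum_range_succ_mk]

theorem sum_grid_prod_centralBinom (d r : ℕ) :
    ∑ k ∈ grid d r, (∏ i, ((k i).centralBinom : ℝ)) * (r - ∑ i, k i).centralBinom =
      4 ^ r * Ring.multichoose (((d : ℝ) + 1) / 2) r := by
  have term : ∀ k ∈ grid d r, (∏ i, ((k i).centralBinom : ℝ)) * (r - ∑ i, k i).centralBinom =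
      4 ^ r * ((∏ i, Ring.multichoose (1 / 2 : ℝ) (k i)) *
        Ring.multichoose (1 / 2 : ℝ) (r - ∑ i, k i)) := by
    intro k hk
    simp only [Nat.cast_centralBinom_eq_four_pow_mul_multichoose, prod_mul_distrib,
      prod_pow_eq_pow_sum]
    rw [← Nat.add_sub_of_le (mem_grid.1 hk), pow_add, Nat.add_sub_cancel_left]
    ring
  rw [sum_congr rfl term, ← mul_sum, sum_grid_prod_multichoose]
  congr 2
  simp only [sum_const, card_univ, Fintype.card_fin, nsmul_eq_mul]
  ring

def cornerSimplex (d : ℕ) (t : ℝ) : Set (Fin d → ℝ) :=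
  {x | (∀ i, 0 ≤ x i) ∧ ∑ i, x i ≤ t}

theorem le_of_mem_cornerSimplex {d : ℕ} {t : ℝ} {x : Fin d → ℝ} (hx : x ∈ cornerSimplex d t)
    (i : Fin d) : x i ≤ t :=
  (single_le_sum (fun j _ => hx.1 j) (mem_univ i)).trans hx.2

theorem isCompact_cornerSimplex (d : ℕ) (t : ℝ) : IsCompact (cornerSimplex d t) := by
  refine isCompact_Icc.of_isClosed_subset ?_
    fun x hx => ⟨fun i => hx.1 i, fun i => le_of_mem_cornerSimplex hx i⟩
  simp only [cornerSimplex, Set.ofPred_and, Set.ofPred_forall]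
  exact (isClosed_iInter fun i => isClosed_le continuous_const (continuous_apply i)).inter
    (isClosed_le (by fun_prop) continuous_const)

theorem simplexSet_eq_cornerSimplex (d : ℕ) : simplexSet d = cornerSimplex d 1 := by
  ext x
  exact ⟨fun hx => ⟨fun i => (hx.1 i).1, hx.2⟩,
    fun hx => ⟨fun i => ⟨hx.1 i, le_of_mem_cornerSimplex hx i⟩, hx.2⟩⟩

theorem cons_mem_cornerSimplex_iff {d : ℕ} {t y : ℝ} {z : Fin d → ℝ} :
    (Fin.cons y z : Fin (d + 1) → ℝ) ∈ cornerSimplex (d + 1) t ↔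
      y ∈ Set.Icc 0 t ∧ z ∈ cornerSimplex d (t - y) := by
  simp only [cornerSimplex, Set.mem_ofPred_eq, Fin.forall_fin_succ, Fin.sum_univ_succ,
    Fin.cons_zero, Fin.cons_succ, Set.mem_Icc]
  constructor
  · rintro ⟨⟨hy, hz⟩, hsum⟩
    have := sum_nonneg fun i (_ : i ∈ univ) => hz i
    exact ⟨⟨hy, by linarith⟩, hz, by linarith⟩
  · rintro ⟨⟨hy, -⟩, hz, hsum⟩
    exact ⟨⟨hy, hz⟩, by linarith⟩

theorem setIntegral_cornerSimplex_succ {d : ℕ} {t : ℝ} {f : (Fin (d + 1) → ℝ) → ℝ}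
    (hf : IntegrableOn f (cornerSimplex (d + 1) t)) :
    ∫ x in cornerSimplex (d + 1) t, f x =
      ∫ y in Set.Icc 0 t, ∫ z in cornerSimplex d (t - y), f (Fin.cons y z) := by
  set e := MeasurableEquiv.piFinSuccAbove (fun _ : Fin (d + 1) => ℝ) 0
  have he := (volume_preserving_piFinSuccAbove (fun _ : Fin (d + 1) => ℝ) 0).symm
  have hsymm : ∀ p, e.symm p = Fin.cons p.1 p.2 := fun p => by
    simp [e, MeasurableEquiv.piFinSuccAbove_symm_apply]
    rfl
  have hF : Integrable (fun p => (cornerSimplex (d + 1) t).indicator f (e.symm p))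
      (volume.prod volume) := by
    rw [← Measure.volume_eq_prod]
    refine (he.integrable_comp_emb (g := (cornerSimplex (d + 1) t).indicator f)
      e.symm.measurableEmbedding).2 ?_
    exact hf.integrable_indicator (isCompact_cornerSimplex _ _).measurableSet
  have fiber : ∀ y, ∫ z, (cornerSimplex (d + 1) t).indicator f (Fin.cons y z) =
      (Set.Icc 0 t).indicator (fun y => ∫ z in cornerSimplex d (t - y), f (Fin.cons y z)) y := by
    intro y
    by_cases hy : y ∈ Set.Icc 0 t
    · have hfiber : Fin.cons y ⁻¹' cornerSimplex (d + 1) t = cornerSimplex d (t - y) := by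
        ext z
        simp [cons_mem_cornerSimplex_iff, hy]
      rw [Set.indicator_of_mem hy, ← integral_indicator (isCompact_cornerSimplex _ _).measurableSet]
      congr 1 with z
      rw [← Set.indicator_comp_right, hfiber]
      rfl
    · simp [Set.indicator, cons_mem_cornerSimplex_iff, hy]
  rw [← integral_indicator (isCompact_cornerSimplex _ _).measurableSet,
    ← he.integral_comp' ((cornerSimplex (d + 1) t).indicator f), Measure.volume_eq_prod,
    integral_prod _ hF]
  simp only [hsymm, fiber]
  exact integral_indicator measurableSet_Icc

theorem integral_pow_mul_one_sub_pow (a b : ℕ) :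
    ∫ x in (0 : ℝ)..1, x ^ a * (1 - x) ^ b =
      (a.factorial * b.factorial / (a + b + 1).factorial : ℝ) := by
  have hbeta : Complex.betaIntegral (a + 1) (b + 1) =
      ↑(∫ x in (0 : ℝ)..1, x ^ a * (1 - x) ^ b) := by
    rw [Complex.betaIntegral, ← intervalIntegral.integral_ofReal]
    refine intervalIntegral.integral_congr fun x _ => ?_
    simp only [add_sub_cancel_right, Complex.cpow_natCast]
    push_cast
    rfl
  have h := Complex.Gamma_mul_Gamma_eq_betaIntegral (s := a + 1) (t := b + 1)
    (by simp; positivity) (by simp; positivity)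
  rw [hbeta, show (a + 1 + (b + 1) : ℂ) = ↑(a + b + 1 : ℕ) + 1 by push_cast; ring] at h
  simp only [Complex.Gamma_nat_eq_factorial] at h
  rw [eq_div_iff (by positivity), mul_comm]
  exact_mod_cast h.symm

theorem integral_pow_mul_sub_pow (a b : ℕ) (t : ℝ) :
    ∫ y in (0 : ℝ)..t, y ^ a * (t - y) ^ b =
      t ^ (a + b + 1) * (a.factorial * b.factorial / (a + b + 1).factorial : ℝ) := by
  have h := intervalIntegral.smul_integral_comp_mul_left (fun y => y ^ a * (t - y) ^ b) t
    (a := 0) (b := 1)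
  simp only [mul_zero, mul_one, smul_eq_mul] at h
  rw [← h, ← integral_pow_mul_one_sub_pow, ← intervalIntegral.integral_const_mul,
    ← intervalIntegral.integral_const_mul]
  refine intervalIntegral.integral_congr fun u _ => ?_
  rw [show t - t * u = t * (1 - u) by ring, mul_pow, mul_pow]
  ring

theorem setIntegral_cornerSimplex_monomial (d : ℕ) (a : Fin d → ℕ) (b : ℕ) {t : ℝ} (ht : 0 ≤ t) :
    ∫ x in cornerSimplex d t, (t - ∑ i, x i) ^ b * ∏ i, x i ^ a i =
      t ^ (∑ i, a i + b + d) *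
        ((∏ i, ((a i).factorial : ℝ)) * b.factorial / (∑ i, a i + b + d).factorial) := by
  induction d generalizing t with
  | zero =>
    have huniv : cornerSimplex 0 t = Set.univ := by simp [cornerSimplex, ht]
    simp [huniv, measureReal_def, volume_pi, b.factorial_ne_zero]
  | succ d ih =>
    set M := ∑ i : Fin d, a i.succ + b + d
    have inner : Set.EqOn
        (fun y => ∫ z in cornerSimplex d (t - y),
          (t - ∑ i, (Fin.cons y z : Fin (d + 1) → ℝ) i) ^ b *
            ∏ i, (Fin.cons y z : Fin (d + 1) → ℝ) i ^ a i)
        (fun y => y ^ a 0 * (t - y) ^ M *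
          ((∏ i : Fin d, ((a i.succ).factorial : ℝ)) * b.factorial / M.factorial))
        (Set.Icc 0 t) := by
      intro y hy
      simp only [Fin.sum_univ_succ, Fin.prod_univ_succ, Fin.cons_zero, Fin.cons_succ,
        ← sub_sub, mul_left_comm _ (y ^ a 0), integral_const_mul]
      rw [ih (fun i => a i.succ) (sub_nonneg.2 hy.2), mul_assoc]
    rw [setIntegral_cornerSimplex_succ
        ((by fun_prop : Continuous _).continuousOn.integrableOn_compact
          (isCompact_cornerSimplex _ _)),
      setIntegral_congr_fun measurableSet_Icc inner, integral_Icc_eq_integral_Ioc,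
      ← intervalIntegral.integral_of_le ht, intervalIntegral.integral_mul_const,
      integral_pow_mul_sub_pow, Fin.sum_univ_succ, Fin.prod_univ_succ,
      show a 0 + M + 1 = a 0 + ∑ i : Fin d, a i.succ + b + (d + 1) by omega]
    field_simp

theorem setIntegral_simplexSet_Pw_sq {d r : ℕ} {k : Fin d → ℕ} (hk : ∑ i, k i ≤ r) :
    ∫ x in simplexSet d, Pw d r k x ^ 2 =
      (r.factorial : ℝ) ^ 2 / (2 * r + d).factorial *
        ((∏ i, ((k i).centralBinom : ℝ)) * (r - ∑ i, k i).centralBinom) := by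
  set m := r - ∑ i, k i
  have hsq : ∀ x, Pw d r k x ^ 2 =
      ((r.factorial : ℝ) / (m.factorial * ∏ i, ((k i).factorial : ℝ))) ^ 2 *
        ((1 - ∑ i, x i) ^ (2 * m) * ∏ i, x i ^ (2 * k i)) := by
    intro x
    simp only [Pw, pow_mul', prod_pow]
    push_cast
    ring
  have hexp : ∑ i, 2 * k i + 2 * m + d = 2 * r + d := by
    rw [← mul_sum]
    omega
  simp only [hsq, integral_const_mul, simplexSet_eq_cornerSimplex,
    setIntegral_cornerSimplex_monomial _ _ _ zero_le_one, one_pow, one_mul, hexp]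
  simp only [← Nat.centralBinom_mul_factorial_sq, Nat.cast_mul, Nat.cast_pow, prod_mul_distrib,
    prod_pow]
  have : ∏ i, ((k i).factorial : ℝ) ≠ 0 := prod_ne_zero_iff.2 fun i _ => by positivity
  field_simp

theorem Real.Gamma_add_nat_eq_mul_multichoose {s : ℝ} (hs : 0 < s) (n : ℕ) :
    Real.Gamma (s + n) = n.factorial * Ring.multichoose s n * Real.Gamma s := by
  induction n with
  | zero => simp
  | succ n ih =>
    have hmc := Ring.succ_mul_multichoose_succ s n
    rw [Nat.cast_succ, ← add_assoc, Real.Gamma_add_one (by positivity), ih, Nat.factorial_succ]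
    push_cast
    linear_combination -(n.factorial : ℝ) * Real.Gamma s * hmc

theorem four_pow_mul_factorial_mul_multichoose_mul_Gamma_mul_Gamma (d r : ℕ) :
    4 ^ r * r.factorial * Ring.multichoose (((d : ℝ) + 1) / 2) r * Real.Gamma ((d + 1) / 2) *
      Real.Gamma (r + d / 2 + 1) = (2 * r + d).factorial * √Real.pi / 2 ^ d := by
  set s : ℝ := ((d : ℝ) + 1) / 2
  have hdup := Real.Gamma_mul_Gamma_add_half (s + r)
  rw [Real.Gamma_add_nat_eq_mul_multichoose (by positivity),
    show s + r + 1 / 2 = r + d / 2 + 1 by ring,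
    show 2 * (s + r) = ((2 * r + d : ℕ) : ℝ) + 1 by push_cast; ring, Real.Gamma_nat_eq_factorial,
    show (1 : ℝ) - (((2 * r + d : ℕ) : ℝ) + 1) = -((2 * r + d : ℕ) : ℝ) by ring,
    Real.rpow_neg zero_le_two, Real.rpow_natCast] at hdup
  rw [show (4 : ℝ) ^ r = 2 ^ (2 * r) by rw [pow_mul]; norm_num, pow_add] at *
  field_simp at hdup ⊢
  linear_combination hdup

theorem integral_sum_sq_multinomial_general (d r : ℕ) :
    ∫ x in simplexSet d, ∑ k ∈ grid d r, (Pw d r k x) ^ 2 =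
      (2 : ℝ) ^ (-(d : ℤ)) * Real.sqrt Real.pi * Real.Gamma (r + 1) /
        (Real.Gamma (d / 2 + 1 / 2) * Real.Gamma (r + d / 2 + 1)) := by
  have hint : ∀ k ∈ grid d r, IntegrableOn (fun x => Pw d r k x ^ 2) (simplexSet d) :=
    fun k _ => (by unfold Pw; fun_prop : Continuous _).continuousOn.integrableOn_compact
      (simplexSet_eq_cornerSimplex d ▸ isCompact_cornerSimplex d 1)
  rw [integral_finsetSum _ hint,
    sum_congr rfl fun k hk => setIntegral_simplexSet_Pw_sq (mem_grid.1 hk), ← mul_sum,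
    sum_grid_prod_centralBinom, show (d : ℝ) / 2 + 1 / 2 = (d + 1) / 2 by ring,
    Real.Gamma_nat_eq_factorial, zpow_neg, zpow_natCast]
  have key := four_pow_mul_factorial_mul_multichoose_mul_Gamma_mul_Gamma d r
  field_simp at key ⊢
  exact key

/-- Exact value of the integral of the sum of squared multinomial weights. -/
theorem integral_sum_sq_multinomial (d r : ℕ) (hd : 1 ≤ d) :
    ∫ x in simplexSet d, ∑ k ∈ grid d r, (Pw d r k x) ^ 2 =
      (2 : ℝ) ^ (-(d : ℤ)) * Real.sqrt Real.pi * Real.Gamma (r + 1) /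
        (Real.Gamma (d / 2 + 1 / 2) * Real.Gamma (r + d / 2 + 1)) :=
  integral_sum_sq_multinomial_general d r
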